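/- arXiv:1505.07204 — 4 statements merged into one kernel-verified Lean document; each statement's English description precedes it below -/
import Mathlib

section
/- For positive integers r and k with 2^k > r and n := 2^k + r satisfying 2r ≤ n, the integer d_{n,2r} := ∏_{i=0}^{n-2r-1} ((n+i)! · i!) / ((2r+i)! · (n-2r+i)!) with n = 2^k + r is odd. -/
open Nat Finset


lemma periodN (f : ℕ → ℕ) (q : ℕ) (hf : ∀ a, f (a + q) = f a) (t a : ℕ) :
    f (a + q * t) = f a := by
  induction t with
  | zero => simp
  | succ t ih => rw [Nat.mul_succ, ← Nat.add_assoc, hf, ih]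

lemma shiftPeriod (f : ℕ → ℕ) (q : ℕ) (hf : ∀ a, f (a + q) = f a) (u : ℕ) :
    ∑ i ∈ range q, f (i + u) = ∑ i ∈ range q, f i := by
  induction u with
  | zero => simp
  | succ u ih =>
      calc ∑ i ∈ range q, f (i + (u + 1))
          = ∑ i ∈ range q, f (i + 1 + u) :=
            Finset.sum_congr rfl fun i _ => by rw [show i + (u + 1) = i + 1 + u by omega]
        _ = ∑ i ∈ range q, f (i + u) := by
            have h2 := Finset.sum_range_succ' (fun i => f (i + u)) q
            have h3 := Finset.sum_range_succ (fun i => f (i + u)) q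
            have h4 : f (q + u) = f (0 + u) := by rw [zero_add, add_comm]; exact hf u
            omega
        _ = ∑ i ∈ range q, f i := ih

lemma sumBlocks (f : ℕ → ℕ) (q : ℕ) (hf : ∀ a, f (a + q) = f a) (t u : ℕ) :
    ∑ i ∈ range (q * t), f (i + u) = t * (∑ j ∈ range q, f j) := by
  induction t with
  | zero => simp
  | succ t ih =>
      rw [Nat.mul_succ, Finset.sum_range_add, ih]
      have h1 : ∀ i ∈ range q, f (q * t + i + u) = f (i + u) := fun i _ => by
        rw [show q * t + i + u = i + u + q * t by omega]; exact periodN f q hf t (i + u)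
      rw [Finset.sum_congr rfl h1, shiftPeriod f q hf u]
      ring

lemma sumWindow (f : ℕ → ℕ) (q : ℕ) (hf : ∀ a, f (a + q) = f a) (m u : ℕ) :
    ∑ i ∈ range m, f (i + u)
      = (m / q) * (∑ j ∈ range q, f j) + ∑ i ∈ range (m % q), f (i + u) := by
  conv_lhs => rw [show m = q * (m / q) + m % q from (Nat.div_add_mod m q).symm]
  rw [Finset.sum_range_add, sumBlocks f q hf (m / q) u]
  congr 1
  refine Finset.sum_congr rfl fun i _ => ?_
  rw [show q * (m / q) + i + u = i + u + q * (m / q) by omega]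
  exact periodN f q hf _ _


lemma countLB (q s u : ℕ) (hs : s < q) :
    ∑ i ∈ range s, (if q ≤ i % q + s then 1 else 0)
      ≤ ∑ i ∈ range s, (if q ≤ (i + u) % q + s then 1 else 0) := by
  rw [← Finset.card_filter, ← Finset.card_filter]
  have hL : (Finset.range s).filter (fun i => q ≤ i % q + s) = Finset.Ico (q - s) s := by
    ext i
    simp only [Finset.mem_filter, Finset.mem_range, Finset.mem_Ico]
    constructor
    · rintro ⟨h1, h2⟩; rw [Nat.mod_eq_of_lt (h1.trans hs)] at h2; omega
    · rintro ⟨h1, h2⟩; refine ⟨h2, ?_⟩; rw [Nat.mod_eq_of_lt (h2.trans hs)]; omega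
  have hT : ((Finset.range s).filter (fun i => ¬ q ≤ (i + u) % q + s)).card ≤ q - s := by
    have hle : ((Finset.range s).filter (fun i => ¬ q ≤ (i + u) % q + s)).card
        ≤ (Finset.range (q - s)).card := by
      apply Finset.card_le_card_of_injOn (fun i => (i + u) % q)
      · intro i hi
        simp only [Finset.mem_coe, Finset.mem_filter, Finset.mem_range, not_le] at hi ⊢
        omega
      · intro i hi j hj hij
        simp only [Finset.coe_filter, Set.mem_setOf_eq, Finset.mem_range] at hi hj
        have h1 : i % q = j % q := Nat.ModEq.add_right_cancel' u hij
        rwa [Nat.mod_eq_of_lt (hi.1.trans hs), Nat.mod_eq_of_lt (hj.1.trans hs)] at h1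
    simpa using hle
  have hsum : ((Finset.range s).filter (fun i => q ≤ (i + u) % q + s)).card
      + ((Finset.range s).filter (fun i => ¬ q ≤ (i + u) % q + s)).card = s := by
    rw [Finset.card_filter_add_card_filter_not, Finset.card_range]
  rw [hL, Nat.card_Ico]
  omega

lemma count2 (e k r : ℕ) (hr : 0 < r) (hrk : r < 2 ^ k) :
    ∑ i ∈ range ((2 ^ k - r) % 2 ^ e), (if 2 ^ e ≤ (i + 2 * r) % 2 ^ e + (2 ^ k - r) % 2 ^ e then 1 else 0)
      = ∑ i ∈ range ((2 ^ k - r) % 2 ^ e), (if 2 ^ e ≤ i % 2 ^ e + (2 ^ k - r) % 2 ^ e then 1 else 0) := by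
  set q := 2 ^ e with hqdef
  have hq0 : 0 < q := pow_pos two_pos e
  set m := 2 ^ k - r with hmdef
  by_cases hek : e ≤ k
  · have hdvd2k : q ∣ 2 ^ k := pow_dvd_pow 2 hek
    set b := r % q with hbdef
    have hbq : b < q := Nat.mod_lt _ hq0
    by_cases hb : b = 0
    · have hqr : q ∣ r := Nat.dvd_of_mod_eq_zero hb
      have hqm : q ∣ m := Nat.dvd_sub hdvd2k hqr
      rw [Nat.mod_eq_zero_of_dvd hqm]
      simp
    · have hs : m % q = q - b := by
        have h1 : (m + r) % q = 0 := by
          rw [show m + r = 2 ^ k by omega]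
          exact Nat.mod_eq_zero_of_dvd hdvd2k
        have h2 : (m % q + b) % q = 0 := by
          rw [hbdef, ← Nat.add_mod]; exact h1
        have h3 : m % q < q := Nat.mod_lt _ hq0
        obtain ⟨c, hc⟩ := Nat.dvd_of_mod_eq_zero h2
        have hc2 : c < 2 := by
          by_contra hcon
          have : q * 2 ≤ q * c := Nat.mul_le_mul_left q (by omega)
          omega
        interval_cases c <;> omega
      rw [hs]
      have hslt : q - b < q := by omega
      have hqs : q = (q - b) + b := by omega
      have hR : ∑ i ∈ range (q - b), (if q ≤ i % q + (q - b) then 1 else 0) = (q - b) - b := by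
        rw [← Finset.card_filter]
        have hset : (range (q - b)).filter (fun i => q ≤ i % q + (q - b)) = Finset.Ico b (q - b) := by
          ext i
          simp only [mem_filter, mem_range, mem_Ico]
          constructor
          · rintro ⟨h1, h2⟩; rw [Nat.mod_eq_of_lt (by omega)] at h2; omega
          · rintro ⟨h1, h2⟩; rw [Nat.mod_eq_of_lt (by omega)]; omega
        rw [hset, Nat.card_Ico]
      have hL : ∑ i ∈ range (q - b), (if q ≤ (i + 2 * r) % q + (q - b) then 1 else 0)
          = (q - b) - b := by
        rw [← Finset.card_filter]
        have key : ∀ i : ℕ, (i + 2 * r) % q = (i + 2 * b) % q := by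
          intro i
          have hrb : r ≡ b [MOD q] := (Nat.mod_modEq r q).symm
          exact Nat.ModEq.add_left i (hrb.mul_left 2)
        have hset : (range (q - b)).filter (fun i => q ≤ (i + 2 * r) % q + (q - b))
            = range ((q - b) - b) := by
          ext i
          simp only [mem_filter, mem_range]
          constructor
          · rintro ⟨h1, h2⟩
            rw [key i] at h2
            by_cases h : i + 2 * b < q
            · rw [Nat.mod_eq_of_lt h] at h2; omega
            · exfalso
              have hm2 : (i + 2 * b) % q = i + 2 * b - q := by
                rw [Nat.mod_eq_sub_mod (by omega), Nat.mod_eq_of_lt (by omega)]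
              omega
          · intro h1
            have h1s : i < q - b := by omega
            refine ⟨h1s, ?_⟩
            rw [key i, Nat.mod_eq_of_lt (by omega)]
            omega
        rw [hset, Finset.card_range]
      rw [hL, hR]
  · have hq2 : 2 ^ (k + 1) ≤ q := by
      rw [hqdef]; exact Nat.pow_le_pow_right (by norm_num) (by omega)
    have hpow : 2 ^ (k + 1) = 2 ^ k + 2 ^ k := by ring
    have hmq : m < q := by omega
    rw [Nat.mod_eq_of_lt hmq]
    rw [Finset.sum_eq_zero, Finset.sum_eq_zero]
    · intro i hi
      simp only [mem_range] at hi
      rw [Nat.mod_eq_of_lt (by omega), if_neg (by omega)]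
    · intro i hi
      simp only [mem_range] at hi
      rw [Nat.mod_eq_of_lt (by omega), if_neg (by omega)]

lemma keySplit (q m u : ℕ) (hq : 0 < q) (i : ℕ) :
    (u + m + i) / q + i / q + (if q ≤ i % q + m % q then 1 else 0)
      = (u + i) / q + (m + i) / q + (if q ≤ (i + u) % q + m % q then 1 else 0) := by
  have e1 := Nat.add_div (a := i + u) (b := m) hq
  have e2 := Nat.add_div (a := i) (b := m) hq
  rw [show u + m + i = i + u + m by omega, show m + i = i + m by omega,
    show u + i = i + u by omega]
  rw [e1, e2]
  by_cases h1 : q ≤ (i + u) % q + m % q <;> by_cases h2 : q ≤ i % q + m % q <;>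
    simp [h1, h2] <;> omega

lemma keyLe (q m u : ℕ) (hq : 0 < q) :
    ∑ i ∈ range m, ((u + i) / q + (m + i) / q)
      ≤ ∑ i ∈ range m, ((u + m + i) / q + i / q) := by
  set f : ℕ → ℕ := fun a => if q ≤ a % q + m % q then 1 else 0 with hfdef
  have hf : ∀ a, f (a + q) = f a := fun a => by simp [hfdef, Nat.add_mod_right]
  have hsplit : ∑ i ∈ range m, ((u + m + i) / q + i / q + f i)
      = ∑ i ∈ range m, ((u + i) / q + (m + i) / q + f (i + u)) :=
    Finset.sum_congr rfl fun i _ => keySplit q m u hq i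
  have w1 := sumWindow f q hf m u
  have w0 : ∑ i ∈ range m, f i
      = (m / q) * (∑ j ∈ range q, f j) + ∑ i ∈ range (m % q), f i := by
    have := sumWindow f q hf m 0; simpa using this
  have hB : ∑ i ∈ range (m % q), f i ≤ ∑ i ∈ range (m % q), f (i + u) :=
    countLB q (m % q) u (Nat.mod_lt _ hq)
  have d1 : ∑ i ∈ range m, ((u + m + i) / q + i / q + f i)
      = ∑ i ∈ range m, ((u + m + i) / q + i / q) + ∑ i ∈ range m, f i := by
    rw [← Finset.sum_add_distrib]
  have d2 : ∑ i ∈ range m, ((u + i) / q + (m + i) / q + f (i + u))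
      = ∑ i ∈ range m, ((u + i) / q + (m + i) / q) + ∑ i ∈ range m, f (i + u) := by
    rw [← Finset.sum_add_distrib]
  omega

lemma keyEq (e k r : ℕ) (hr : 0 < r) (hrk : r < 2 ^ k) :
    ∑ i ∈ range (2 ^ k - r), ((2 * r + i) / 2 ^ e + ((2 ^ k - r) + i) / 2 ^ e)
      = ∑ i ∈ range (2 ^ k - r), ((2 * r + (2 ^ k - r) + i) / 2 ^ e + i / 2 ^ e) := by
  set q := 2 ^ e with hqdef
  set m := 2 ^ k - r with hmdef
  have hq : 0 < q := pow_pos two_pos e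
  set f : ℕ → ℕ := fun a => if q ≤ a % q + m % q then 1 else 0 with hfdef
  have hf : ∀ a, f (a + q) = f a := fun a => by simp [hfdef, Nat.add_mod_right]
  have hsplit : ∑ i ∈ range m, ((2 * r + m + i) / q + i / q + f i)
      = ∑ i ∈ range m, ((2 * r + i) / q + (m + i) / q + f (i + 2 * r)) :=
    Finset.sum_congr rfl fun i _ => keySplit q m (2 * r) hq i
  have w1 := sumWindow f q hf m (2 * r)
  have w0 : ∑ i ∈ range m, f i
      = (m / q) * (∑ j ∈ range q, f j) + ∑ i ∈ range (m % q), f i := by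
    have := sumWindow f q hf m 0; simpa using this
  have hB : ∑ i ∈ range (m % q), f (i + 2 * r) = ∑ i ∈ range (m % q), f i :=
    count2 e k r hr hrk
  have d1 : ∑ i ∈ range m, ((2 * r + m + i) / q + i / q + f i)
      = ∑ i ∈ range m, ((2 * r + m + i) / q + i / q) + ∑ i ∈ range m, f i := by
    rw [← Finset.sum_add_distrib]
  have d2 : ∑ i ∈ range m, ((2 * r + i) / q + (m + i) / q + f (i + 2 * r))
      = ∑ i ∈ range m, ((2 * r + i) / q + (m + i) / q) + ∑ i ∈ range m, f (i + 2 * r) := by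
    rw [← Finset.sum_add_distrib]
  omega

/-- for `n = 2^k + r` with `r < 2^k` and `2r ≤ n`, the integer
`d_{n,2r} = ∏_{i=0}^{n-2r-1} ((n+i)!·i!)/((2r+i)!·(n-2r+i)!)` is odd. -/
theorem stmt2 (r k : ℕ) (hr : 0 < r) (hk : 0 < k) (hrk : r < 2 ^ k) (n : ℕ)
    (hn : n = 2 ^ k + r) (h2r : 2 * r ≤ n) :
    ∃ d : ℕ, Odd d ∧
      (d : ℚ) = ∏ i ∈ Finset.range (n - 2 * r),
        (((n + i)! * i ! : ℚ) / ((2 * r + i)! * (n - 2 * r + i)!)) := by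
  subst hn
  have hpow : 2 ^ (k + 1) = 2 ^ k + 2 ^ k := by ring
  have hm : 2 ^ k + r - 2 * r = 2 ^ k - r := by omega
  rw [hm]
  set m : ℕ := 2 ^ k - r with hmdef
  have hum : 2 * r + m = 2 ^ k + r := by omega
  set N : ℕ := ∏ i ∈ Finset.range m, ((2 ^ k + r + i)! * i !) with hNdef
  set D : ℕ := ∏ i ∈ Finset.range m, ((2 * r + i)! * (m + i)!) with hDdef
  have hN0 : N ≠ 0 := by
    rw [hNdef]
    exact Finset.prod_ne_zero_iff.mpr fun i _ =>
      Nat.mul_ne_zero (factorial_ne_zero _) (factorial_ne_zero _)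
  have hD0 : D ≠ 0 := by
    rw [hDdef]
    exact Finset.prod_ne_zero_iff.mpr fun i _ =>
      Nat.mul_ne_zero (factorial_ne_zero _) (factorial_ne_zero _)
  set B : ℕ := 2 ^ (k + 1) with hBdef
  have hvN : ∀ p : ℕ, p.Prime → N.factorization p
      = ∑ e ∈ Finset.Ico 1 B, ∑ i ∈ Finset.range m, ((2 ^ k + r + i) / p ^ e + i / p ^ e) := by
    intro p hp
    haveI : Fact p.Prime := ⟨hp⟩
    have hfac : ∀ x : ℕ, x < B → (x !).factorization p = ∑ e ∈ Finset.Ico 1 B, x / p ^ e := by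
      intro x hx
      rw [Nat.factorization_def _ hp]
      exact padicValNat_factorial (lt_of_le_of_lt (Nat.log_le_self p x) hx)
    rw [hNdef, Nat.factorization_prod
      (fun i _ => Nat.mul_ne_zero (factorial_ne_zero _) (factorial_ne_zero _))]
    rw [Finset.sum_apply']
    rw [← Finset.sum_comm]
    refine Finset.sum_congr rfl fun i hi => ?_
    simp only [Finset.mem_range] at hi
    rw [Nat.factorization_mul (factorial_ne_zero _) (factorial_ne_zero _), Finsupp.add_apply]
    rw [hfac _ (by omega), hfac _ (by omega), ← Finset.sum_add_distrib]
  have hvD : ∀ p : ℕ, p.Prime → D.factorization p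
      = ∑ e ∈ Finset.Ico 1 B, ∑ i ∈ Finset.range m, ((2 * r + i) / p ^ e + (m + i) / p ^ e) := by
    intro p hp
    haveI : Fact p.Prime := ⟨hp⟩
    have hfac : ∀ x : ℕ, x < B → (x !).factorization p = ∑ e ∈ Finset.Ico 1 B, x / p ^ e := by
      intro x hx
      rw [Nat.factorization_def _ hp]
      exact padicValNat_factorial (lt_of_le_of_lt (Nat.log_le_self p x) hx)
    rw [hDdef, Nat.factorization_prod
      (fun i _ => Nat.mul_ne_zero (factorial_ne_zero _) (factorial_ne_zero _))]
    rw [Finset.sum_apply']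
    rw [← Finset.sum_comm]
    refine Finset.sum_congr rfl fun i hi => ?_
    simp only [Finset.mem_range] at hi
    rw [Nat.factorization_mul (factorial_ne_zero _) (factorial_ne_zero _), Finsupp.add_apply]
    rw [hfac _ (by omega), hfac _ (by omega), ← Finset.sum_add_distrib]
  have hdvd : D ∣ N := by
    rw [← Nat.factorization_le_iff_dvd hD0 hN0, Finsupp.le_def]
    intro p
    by_cases hp : p.Prime
    · rw [hvN p hp, hvD p hp]
      refine Finset.sum_le_sum fun e _ => ?_
      have h := keyLe (p ^ e) m (2 * r) (pow_pos hp.pos e)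
      rw [hum] at h
      exact h
    · simp [Nat.factorization_eq_zero_of_not_prime _ hp]
  have heq2 : D.factorization 2 = N.factorization 2 := by
    rw [hvN 2 Nat.prime_two, hvD 2 Nat.prime_two]
    refine Finset.sum_congr rfl fun e _ => ?_
    have h := keyEq e k r hr hrk
    rw [← hmdef, hum] at h
    exact h
  refine ⟨N / D, ?_, ?_⟩
  · have hd0 : N / D ≠ 0 := by
      have hmul := Nat.div_mul_cancel hdvd
      intro h
      rw [h, zero_mul] at hmul
      exact hN0 hmul.symm
    have hfd : (N / D).factorization 2 = 0 := by
      rw [Nat.factorization_div hdvd, Finsupp.tsub_apply, heq2]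
      omega
    have h2 : ¬ (2 ∣ N / D) := by
      intro hdvd2
      have := Nat.Prime.factorization_pos_of_dvd Nat.prime_two hd0 hdvd2
      omega
    rw [Nat.odd_iff]
    omega
  · rw [Nat.cast_div hdvd (by exact_mod_cast hD0)]
    rw [Finset.prod_div_distrib]
    congr 1
    · rw [hNdef]; push_cast; ring
    · rw [hDdef]; push_cast; ring
end

section
/- Let n ≥ 2 and let vectors a_1, …, a_m ∈ ℝ^n satisfy the complement property: for every subset I ⊆ {1,…,m}, either {a_j : j ∈ I} spans ℝ^n or {a_j : j ∈ I^c} spans ℝ^n. Then the map x ↦ (|⟨a_1,x⟩|², …, |⟨a_m,x⟩|²) determines x up to sign: if |⟨a_j,x⟩| = |⟨a_j,y⟩| for all j, then x = y or x = −y. -/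
open Matrix

lemma aux_span_dot {n : ℕ} (S : Set (Fin n → ℝ)) (hS : Submodule.span ℝ S = ⊤)
    (v : Fin n → ℝ) (hv : ∀ w ∈ S, w ⬝ᵥ v = 0) : v = 0 := by
  have key : ∀ w ∈ Submodule.span ℝ S, w ⬝ᵥ v = 0 := by
    intro w hw
    induction hw using Submodule.span_induction with
    | mem u hu => exact hv u hu
    | zero => simp
    | add u t _ _ hu ht => simp [add_dotProduct, hu, ht]
    | smul c u _ hu => simp [smul_dotProduct, hu]
  exact dotProduct_self_eq_zero.mp (key v (hS ▸ Submodule.mem_top))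

/-- the complement property implies phase retrieval up to sign. -/
theorem stmt11 (n m : ℕ) (hn : 2 ≤ n) (a : Fin m → (Fin n → ℝ))
    (hcp : ∀ I : Finset (Fin m),
      Submodule.span ℝ (a '' (I : Set (Fin m))) = ⊤ ∨
      Submodule.span ℝ (a '' ((I : Set (Fin m))ᶜ)) = ⊤)
    (x y : Fin n → ℝ)
    (h : ∀ j, |a j ⬝ᵥ x| = |a j ⬝ᵥ y|) :
    x = y ∨ x = -y := by
  classical
  have hsplit : ∀ j, a j ⬝ᵥ (x - y) = 0 ∨ a j ⬝ᵥ (x + y) = 0 := by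
    intro j
    have := h j
    have h2 : (a j ⬝ᵥ x - a j ⬝ᵥ y) * (a j ⬝ᵥ x + a j ⬝ᵥ y) = 0 := by
      have := sq_abs (a j ⬝ᵥ x) ▸ sq_abs (a j ⬝ᵥ y) ▸ congrArg (· ^ 2) this
      nlinarith [this]
    rcases mul_eq_zero.mp h2 with h3 | h3
    · left; rw [dotProduct_sub]; linarith
    · right; rw [dotProduct_add]; linarith
  set I : Finset (Fin m) := Finset.univ.filter (fun j => a j ⬝ᵥ (x - y) = 0) with hI
  rcases hcp I with hsp | hsp
  · left
    have : x - y = 0 := by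
      apply aux_span_dot _ hsp
      rintro w ⟨j, hj, rfl⟩
      exact (Finset.mem_filter.mp hj).2
    exact sub_eq_zero.mp this
  · right
    have : x + y = 0 := by
      apply aux_span_dot _ hsp
      rintro w ⟨j, hj, rfl⟩
      simp only [Set.mem_compl_iff, Finset.coe_filter, Set.mem_setOf_eq] at hj
      rcases hsplit j with h1 | h1
      · exact absurd (Finset.mem_filter.mpr ⟨Finset.mem_univ j, h1⟩) hj
      · exact h1
    have := eq_neg_of_add_eq_zero_left this
    exact this
end

section
/- Let n ≥ 2 and a_1,…,a_m ∈ ℝ^n with m ≤ 2n − 2. Then the vectors fail the complement property: there exists a subset I ⊆ {1,…,m} such that neither {a_j : j ∈ I} nor {a_j : j ∈ I^c} spans ℝ^n. Consequently, the measurement map x ↦ (|⟨a_j,x⟩|²)_{j=1}^m is not injective on ℝ^n up to sign. -/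
open Matrix

/-!
Split the `m ≤ 2(n - 1)` indices into two parts `I`, `Iᶜ` of at most `n - 1` elements each;
then neither `{aⱼ}_{j ∈ I}` nor `{aⱼ}_{j ∉ I}` spans `ℝⁿ`. Pick nonzero `v ⊥ aⱼ` for `j ∈ I` and
`u ⊥ aⱼ` for `j ∉ I`. Every `aⱼ` is orthogonal to `u` or to `v`, so `⟨aⱼ, u + v⟩² = ⟨aⱼ, u - v⟩²`,
while `u + v ≠ ±(u - v)`.
-/

open Finset in
theorem Finset.exists_card_le_and_card_compl_le {ι : Type*} [Fintype ι] [DecidableEq ι] {k : ℕ}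
    (h : Fintype.card ι ≤ 2 * k) : ∃ I : Finset ι, #I ≤ k ∧ #Iᶜ ≤ k := by
  obtain ⟨I, -, hI⟩ := (univ : Finset ι).exists_subset_card_eq
    (min_le_right k (#(univ : Finset ι)))
  refine ⟨I, hI ▸ min_le_left _ _, ?_⟩
  rw [card_compl, hI, card_univ]
  omega

theorem Submodule.span_image_ne_top_of_card_lt {K V ι : Type*} [DivisionRing K] [AddCommGroup V]
    [Module K V] [FiniteDimensional K V] (a : ι → V) {s : Finset ι}
    (hs : s.card < Module.finrank K V) : span K (a '' s) ≠ ⊤ := by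
  classical
  intro htop
  have hle := finrank_span_finset_le_card (R := K) (s.image a)
  rw [Set.finrank, Finset.coe_image, htop, finrank_top] at hle
  exact absurd (hle.trans Finset.card_image_le) hs.not_ge

theorem exists_ne_zero_forall_dotProduct_eq_zero_of_span_ne_top {K ι : Type*} [Field K]
    [Fintype ι] {S : Set (ι → K)} (h : Submodule.span K S ≠ ⊤) :
    ∃ u ≠ 0, ∀ v ∈ S, v ⬝ᵥ u = 0 := by
  classical
  obtain ⟨f, hf0, hf⟩ := (Submodule.span K S).exists_dual_map_eq_bot_of_lt_top h.lt_top
    inferInstance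
  refine ⟨(dotProductEquiv K ι).symm f, by simpa using hf0, fun v hv => ?_⟩
  have hfv : f v = 0 := (Submodule.eq_bot_iff _).mp hf _ ⟨v, Submodule.subset_span hv, rfl⟩
  rw [dotProduct_comm, ← dotProductEquiv_apply_apply, LinearEquiv.apply_symm_apply, hfv]

theorem exists_ne_ne_neg_forall_sq_dotProduct_eq_of_span_ne_top {K ι κ : Type*} [Field K]
    [NeZero (2 : K)] [Fintype ι] (a : κ → ι → K) {I : Set κ}
    (hI : Submodule.span K (a '' I) ≠ ⊤) (hIc : Submodule.span K (a '' Iᶜ) ≠ ⊤) :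
    ∃ x y : ι → K, x ≠ y ∧ x ≠ -y ∧ ∀ j, (a j ⬝ᵥ x) ^ 2 = (a j ⬝ᵥ y) ^ 2 := by
  obtain ⟨v, hv0, hv⟩ := exists_ne_zero_forall_dotProduct_eq_zero_of_span_ne_top hI
  obtain ⟨u, hu0, hu⟩ := exists_ne_zero_forall_dotProduct_eq_zero_of_span_ne_top hIc
  refine ⟨u + v, u - v, fun h => hv0 ?_, fun h => hu0 ?_, fun j => ?_⟩
  · have h2v : (2 : K) • v = 0 := by rw [two_smul]; linear_combination h
    exact (smul_eq_zero.mp h2v).resolve_left two_ne_zero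
  · have h2u : (2 : K) • u = 0 := by rw [two_smul]; linear_combination h
    exact (smul_eq_zero.mp h2u).resolve_left two_ne_zero
  · rw [dotProduct_add, dotProduct_sub]
    by_cases hj : j ∈ I
    · rw [hv _ (Set.mem_image_of_mem a hj), add_zero, sub_zero]
    · rw [hu _ (Set.mem_image_of_mem a hj), zero_add, zero_sub, neg_sq]

theorem stmt12_general (n m : ℕ) (hm : m + 2 ≤ 2 * n) (a : Fin m → (Fin n → ℝ)) :
    (∃ I : Finset (Fin m),
      Submodule.span ℝ (a '' (I : Set (Fin m))) ≠ ⊤ ∧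
      Submodule.span ℝ (a '' ((I : Set (Fin m))ᶜ)) ≠ ⊤) ∧
    ∃ x y : Fin n → ℝ, x ≠ y ∧ x ≠ -y ∧ ∀ j, (a j ⬝ᵥ x) ^ 2 = (a j ⬝ᵥ y) ^ 2 := by
  obtain ⟨I, hI, hIc⟩ := Finset.exists_card_le_and_card_compl_le (k := n - 1) (ι := Fin m)
    (by rw [Fintype.card_fin]; omega)
  have hspan : ∀ s : Finset (Fin m), s.card ≤ n - 1 → Submodule.span ℝ (a '' s) ≠ ⊤ :=
    fun s hs => Submodule.span_image_ne_top_of_card_lt a (by rw [Module.finrank_fin_fun]; omega)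
  have hspanIc : Submodule.span ℝ (a '' (I : Set (Fin m))ᶜ) ≠ ⊤ := by
    rw [← Finset.coe_compl]
    exact hspan _ hIc
  exact ⟨⟨I, hspan I hI, hspanIc⟩,
    exists_ne_ne_neg_forall_sq_dotProduct_eq_of_span_ne_top a (hspan I hI) hspanIc⟩

/-- with `m ≤ 2n - 2` vectors in `ℝⁿ` (`n ≥ 2`), the complement property fails,
and consequently the measurement map `x ↦ (⟨aⱼ,x⟩²)ⱼ` is not injective up to sign. -/
theorem stmt12 (n m : ℕ) (hn : 2 ≤ n) (hm : m + 2 ≤ 2 * n) (a : Fin m → (Fin n → ℝ)) :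
    (∃ I : Finset (Fin m),
      Submodule.span ℝ (a '' (I : Set (Fin m))) ≠ ⊤ ∧
      Submodule.span ℝ (a '' ((I : Set (Fin m))ᶜ)) ≠ ⊤) ∧
    ∃ x y : Fin n → ℝ, x ≠ y ∧ x ≠ -y ∧ ∀ j, (a j ⬝ᵥ x) ^ 2 = (a j ⬝ᵥ y) ^ 2 :=
  stmt12_general n m hm a
end

section
/- For positive integers n and r with 2r < n, the rational expression d_{n,2r} = ∏_{i=0}^{n-2r-1} ((n+i)! · i!) / ((2r+i)! · (n-2r+i)!) is a positive integer. -/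
/-!
With `k = 2r` and `m = n - 2r`, the number `d` is the Vandermonde product `∏_{i<j} (v j - v i)`
of the `2m` integers `v = 0, …, m - 1, k + m, …, k + 2m - 1`, divided by the Vandermonde product
`∏_{j<2m} j!` of `0, …, 2m - 1`. The latter divides every integer Vandermonde product of the same
size, since such a product is `∏_{j<2m} j!` times the determinant of the integer matrix
`(choose (v i) j)`.
-/

open Nat Finset

theorem Fin.prod_univ_prod_Ioi_eq_prod_range_prod_range {M : Type*} [CommMonoid M] (N : ℕ)
    (f : ℕ → ℕ → M) :
    ∏ i : Fin N, ∏ j ∈ Ioi i, f i j = ∏ j ∈ range N, ∏ i ∈ range j, f i j :=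
  calc ∏ i : Fin N, ∏ j ∈ Ioi i, f i j = ∏ i : Fin N, ∏ j ∈ Ioo (i : ℕ) N, f i j :=
        prod_congr rfl fun i _ => by rw [← Fin.map_valEmbedding_Ioi, prod_map]; rfl
    _ = ∏ i ∈ range N, ∏ j ∈ Ioo i N, f i j :=
        Fin.prod_univ_eq_prod_range (fun i => ∏ j ∈ Ioo i N, f i j) N
    _ = ∏ j ∈ range N, ∏ i ∈ range j, f i j :=
        prod_comm' fun i j => by simp only [mem_range, mem_Ioo]; omega

theorem prod_range_factorial_dvd_prod_sub (v : ℕ → ℤ) (N : ℕ) :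
    (∏ j ∈ range N, (j ! : ℤ)) ∣ ∏ j ∈ range N, ∏ i ∈ range j, (v j - v i) := by
  cases N with
  | zero => simp
  | succ N =>
    have h := Matrix.superFactorial_dvd_vandermonde_det (fun i : Fin (N + 1) => v i)
    rw [Matrix.det_vandermonde,
      Fin.prod_univ_prod_Ioi_eq_prod_range_prod_range (N + 1) fun i j => v j - v i] at h
    convert h using 1
    rw [← prod_range_succ_factorial]
    push_cast
    rfl

theorem prod_range_natCast_sub_eq_descFactorial (n m : ℕ) :
    ∏ i ∈ range m, ((n : ℤ) - i) = n.descFactorial m := by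
  rw [← descPochhammer_eval_eq_prod_range, descPochhammer_eval_eq_descFactorial]

theorem prod_range_prod_range_sub_of_gap {k m : ℕ} (v : ℕ → ℤ) (hlow : ∀ j < m, v j = j)
    (hhigh : ∀ j, v (m + j) = (k + m + j : ℕ)) :
    ∏ j ∈ range (m + m), ∏ i ∈ range j, (v j - v i) =
      (∏ j ∈ range m, (j ! : ℤ)) ^ 2 * ∏ j ∈ range m, ((k + m + j).descFactorial m : ℤ) := by
  have low : ∀ j ∈ range m, ∏ i ∈ range j, (v j - v i) = j ! := fun j hj => by
    rw [mem_range] at hj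
    rw [← descFactorial_self, ← prod_range_natCast_sub_eq_descFactorial]
    exact prod_congr rfl fun i hi => by rw [hlow j hj, hlow i (by grind)]
  have high : ∀ j ∈ range m, ∏ i ∈ range (m + j), (v (m + j) - v i) =
      (k + m + j).descFactorial m * j ! := fun j _ => by
    rw [prod_range_add, ← prod_range_natCast_sub_eq_descFactorial, ← descFactorial_self,
      ← prod_range_natCast_sub_eq_descFactorial]
    congr 1
    · exact prod_congr rfl fun i hi => by rw [hhigh, hlow i (mem_range.mp hi)]
    · exact prod_congr rfl fun i _ => by rw [hhigh, hhigh]; push_cast; ring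
  rw [prod_range_add, prod_congr rfl low, prod_congr rfl high, prod_mul_distrib]
  ring

theorem prod_range_factorial_mul_factorial_dvd (k m : ℕ) :
    ∏ i ∈ range m, ((k + i)! * (m + i)!) ∣ ∏ i ∈ range m, ((k + m + i)! * i !) := by
  obtain ⟨c, hc⟩ :=
    prod_range_factorial_dvd_prod_sub (fun j => if j < m then j else j + k) (m + m)
  rw [prod_range_prod_range_sub_of_gap (k := k) _ (fun j hj => if_pos hj)
    (fun j => by rw [if_neg (by omega)]; push_cast; ring), prod_range_add] at hc
  have hdesc : ∀ i ∈ range m, ((k + i)! : ℤ) * (k + m + i).descFactorial m = (k + m + i)! :=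
    fun i _ => by
      rw [← factorial_mul_descFactorial (by omega : m ≤ k + m + i),
        show k + m + i - m = k + i by omega]
      push_cast
      rfl
  have hpos : (∏ j ∈ range m, (j ! : ℤ)) ≠ 0 := prod_ne_zero_iff.2 fun j _ => by positivity
  refine Int.natCast_dvd_natCast.mp ⟨c, mul_left_cancel₀ hpos ?_⟩
  push_cast
  rw [prod_mul_distrib, prod_mul_distrib, ← prod_congr rfl hdesc, prod_mul_distrib]
  linear_combination (∏ i ∈ range m, ((k + i)! : ℤ)) * hc

theorem exists_nat_eq_prod_factorial_div (k m : ℕ) :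
    ∃ d : ℕ, 0 < d ∧
      (d : ℚ) = ∏ i ∈ range m, (((k + m + i)! * i ! : ℚ) / ((k + i)! * (m + i)!)) := by
  have hdvd := prod_range_factorial_mul_factorial_dvd k m
  have hpos : 0 < ∏ i ∈ range m, ((k + i)! * (m + i)!) := prod_pos fun i _ => by positivity
  refine ⟨_, Nat.div_pos (Nat.le_of_dvd (prod_pos fun i _ => by positivity) hdvd) hpos, ?_⟩
  rw [Nat.cast_div hdvd (by positivity), prod_div_distrib]
  push_cast
  rfl

theorem stmt16_general (n r : ℕ) (hrn : 2 * r < n) :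
    ∃ d : ℕ, 0 < d ∧
      (d : ℚ) = ∏ i ∈ Finset.range (n - 2 * r),
        (((n + i)! * i ! : ℚ) / ((2 * r + i)! * (n - 2 * r + i)!)) := by
  obtain ⟨d, hd, h⟩ := exists_nat_eq_prod_factorial_div (2 * r) (n - 2 * r)
  rw [Nat.add_sub_cancel' hrn.le] at h
  exact ⟨d, hd, h⟩

/-- the rational expression `d_{n,2r}` is a positive integer. -/
theorem stmt16 (n r : ℕ) (hn : 0 < n) (hr : 0 < r) (hrn : 2 * r < n) :
    ∃ d : ℕ, 0 < d ∧
      (d : ℚ) = ∏ i ∈ Finset.range (n - 2 * r),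
        (((n + i)! * i ! : ℚ) / ((2 * r + i)! * (n - 2 * r + i)!)) :=
  stmt16_general n r hrn
end
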